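/- Let (Γ, G) be a boundary pair for h with Dirichlet operator H^D, and for z ∉ spec(H^D) let S(z) : ran Γ → H¹ be the Dirichlet solution operator, the inverse of Γ restricted to the weak solution space L¹(z). Then for z, w ∉ spec(H^D) one has S(z) − S(w) = (z − w)(H^D − z)⁻¹ S(w) as operators ran Γ → H¹; equivalently S(z) = U(z,w) S(w) where U(z,w) = id + (z−w)(H^D − z)⁻¹. -/

import Mathlib

/-!
The difference `d = S(z)φ - S(w)φ - (z - w) u`, where `u ∈ ker Γ` is the form-domain
representative of `(H^D - z)⁻¹ S(w)φ`, has zero boundary value and, by linearity of the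
weak equations, is a weak solution of `(h - z) d = 0` in `ker Γ`. Maximality of the
Dirichlet operator puts `d` into `dom H^D` with `H^D d = z d`, and the resolvent at `z`
then forces `d = 0`.
-/

/-- `R` is a (bounded, everywhere defined, two-sided) resolvent of the (possibly
unbounded) operator `T` at the spectral point `z`, witnessing `z ∉ spec T`. -/
def ResolventAt {E : Type*} [NormedAddCommGroup E] [NormedSpace ℂ E]
    (T : E →ₗ.[ℂ] E) (z : ℂ) (R : E →L[ℂ] E) : Prop :=
  (∀ x : E, ∃ hx : R x ∈ T.domain, T ⟨R x, hx⟩ - z • R x = x) ∧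
  ∀ u : T.domain, R (T u - z • (u : E)) = (u : E)

open scoped InnerProductSpace

theorem ResolventAt.eq_zero_of_apply_eq_smul {E : Type*} [NormedAddCommGroup E]
    [NormedSpace ℂ E] {T : E →ₗ.[ℂ] E} {z : ℂ} {R : E →L[ℂ] E} (hR : ResolventAt T z R)
    (u : T.domain) (hu : T u = z • (u : E)) : (u : E) = 0 := by
  simpa [hu] using (hR.2 u).symm

section WeakSolution

variable {H H1 : Type*} [NormedAddCommGroup H] [InnerProductSpace ℂ H]
  [NormedAddCommGroup H1] [InnerProductSpace ℂ H1]

theorem isLinearMap_right_of_inner_eq_add (J : H1 →L[ℂ] H) (a : H1 → H1 → ℂ)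
    (hpol : ∀ u v : H1, ⟪u, v⟫_ℂ = ⟪J u, J v⟫_ℂ + a u v) (f : H1) :
    IsLinearMap ℂ (a f) := by
  have ha : ∀ v, a f v = ⟪f, v⟫_ℂ - ⟪J f, J v⟫_ℂ := fun v => by rw [hpol]; ring
  constructor
  · intro v v'
    simp only [ha, map_add, inner_add_right]
    ring
  · intro c v
    simp only [ha, map_smul, inner_smul_right, smul_eq_mul]
    ring

/-- `u` solves `A u = g` weakly for the operator `A` of the form `a`, with test functions in `K`
and `J` the embedding of the form domain into `H`. -/
def IsWeakSolution (a : H1 → H1 → ℂ) (J : H1 →L[ℂ] H) (K : Set H1) (u : H1) (g : H) : Prop :=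
  ∀ f ∈ K, a f u = ⟪J f, g⟫_ℂ

variable {a : H1 → H1 → ℂ} {J : H1 →L[ℂ] H} {K : Set H1} {u v : H1} {g k : H}

theorem IsWeakSolution.sub (hlin : ∀ f, IsLinearMap ℂ (a f)) (hu : IsWeakSolution a J K u g)
    (hv : IsWeakSolution a J K v k) : IsWeakSolution a J K (u - v) (g - k) := fun f hf => by
  rw [(hlin f).map_sub, inner_sub_right, hu f hf, hv f hf]

theorem IsWeakSolution.smul (hlin : ∀ f, IsLinearMap ℂ (a f)) (hu : IsWeakSolution a J K u g)
    (c : ℂ) : IsWeakSolution a J K (c • u) (c • g) := fun f hf => by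
  rw [(hlin f).map_smul, inner_smul_right, hu f hf, smul_eq_mul]

end WeakSolution

theorem dirichlet_solution_operator_difference_general
    {H H1 G : Type*}
    [NormedAddCommGroup H] [InnerProductSpace ℂ H]
    [NormedAddCommGroup H1] [InnerProductSpace ℂ H1]
    [NormedAddCommGroup G] [InnerProductSpace ℂ G]
    (J : H1 →L[ℂ] H) (hJinj : Function.Injective J)
    (hform : H1 → H1 → ℂ)
    (hpol : ∀ u v : H1, (inner ℂ u v : ℂ) = (inner ℂ (J u) (J v) : ℂ) + hform u v)
    (Γ : H1 →L[ℂ] G)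
    (HD : H →ₗ.[ℂ] H)
    (hHDdom : ∀ u : HD.domain, ∃ u1 : H1, J u1 = (u : H) ∧ Γ u1 = 0 ∧
      ∀ f : H1, Γ f = 0 → hform f u1 = (inner ℂ (J f) (HD u) : ℂ))
    (hHDmax : ∀ (u1 : H1) (w : H), Γ u1 = 0 →
      (∀ f : H1, Γ f = 0 → hform f u1 = (inner ℂ (J f) w : ℂ)) →
      ∃ hu : J u1 ∈ HD.domain, HD ⟨J u1, hu⟩ = w)
    (z w : ℂ) (Rz : H →L[ℂ] H) (hRz : ResolventAt HD z Rz)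
    -- the Dirichlet solution operator at `z`
    (Sz : (LinearMap.range (Γ : H1 →ₗ[ℂ] G) : Submodule ℂ G) →ₗ[ℂ] H1)
    (hSz1 : ∀ (φ : (LinearMap.range (Γ : H1 →ₗ[ℂ] G) : Submodule ℂ G)) (f : H1), Γ f = 0 →
      hform f (Sz φ) = z * (inner ℂ (J f) (J (Sz φ)) : ℂ))
    (hSz2 : ∀ φ : (LinearMap.range (Γ : H1 →ₗ[ℂ] G) : Submodule ℂ G), Γ (Sz φ) = (φ : G))
    -- the Dirichlet solution operator at `w`
    (Sw : (LinearMap.range (Γ : H1 →ₗ[ℂ] G) : Submodule ℂ G) →ₗ[ℂ] H1)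
    (hSw1 : ∀ (φ : (LinearMap.range (Γ : H1 →ₗ[ℂ] G) : Submodule ℂ G)) (f : H1), Γ f = 0 →
      hform f (Sw φ) = w * (inner ℂ (J f) (J (Sw φ)) : ℂ))
    (hSw2 : ∀ φ : (LinearMap.range (Γ : H1 →ₗ[ℂ] G) : Submodule ℂ G), Γ (Sw φ) = (φ : G)) :
    ∀ φ : (LinearMap.range (Γ : H1 →ₗ[ℂ] G) : Submodule ℂ G), ∃ v : H1,
      Γ v = 0 ∧ J v = (z - w) • Rz (J (Sw φ)) ∧ Sz φ = Sw φ + v := by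
  intro φ
  have hlin := isLinearMap_right_of_inner_eq_add J hform hpol
  obtain ⟨hdom, hres⟩ := hRz.1 (J (Sw φ))
  obtain ⟨u, hJu, hΓu, hu⟩ := hHDdom ⟨_, hdom⟩
  refine ⟨(z - w) • u, by simp [hΓu], by simp [hJu], ?_⟩
  set d := Sz φ - Sw φ - (z - w) • u
  have hΓd : Γ d = 0 := by simp [d, hSz2, hSw2, hΓu]
  have hsol : IsWeakSolution hform J {f | Γ f = 0} d (z • J d) := by
    have hSz : IsWeakSolution hform J {f | Γ f = 0} (Sz φ) (z • J (Sz φ)) := fun f hf => by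
      rw [hSz1 φ f hf, inner_smul_right]
    have hSw : IsWeakSolution hform J {f | Γ f = 0} (Sw φ) (w • J (Sw φ)) := fun f hf => by
      rw [hSw1 φ f hf, inner_smul_right]
    have hu : IsWeakSolution hform J {f | Γ f = 0} u (HD ⟨_, hdom⟩) := hu
    have hHDu : HD ⟨_, hdom⟩ = J (Sw φ) + z • J u := by
      rw [hJu]; exact (sub_eq_iff_eq_add.mp hres)
    convert (hSz.sub hlin hSw).sub hlin (hu.smul hlin (z - w)) using 1
    simp only [d, hHDu, map_sub, map_smul]
    module
  obtain ⟨hdom_d, hHDd⟩ := hHDmax d _ hΓd hsol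
  have hd : d = 0 := hJinj (by simpa using hRz.eq_zero_of_apply_eq_smul ⟨_, hdom_d⟩ hHDd)
  rwa [← sub_eq_zero, ← sub_sub]

/-- Let `(Γ, G)` be a boundary pair for `h` with Dirichlet operator
`HD`, and for `z, w ∉ spec HD` let `Sz`, `Sw` be the Dirichlet solution operators
(the inverses of `Γ` restricted to the weak solution spaces `L¹(z)`, `L¹(w)`).  Then
`S(z) - S(w) = (z-w)(HD - z)⁻¹ S(w)` as operators `ran Γ → H¹`; the correction term
`(z-w)(HD - z)⁻¹ S(w)φ` is realised by an element `v ∈ ker Γ ⊂ H¹`. -/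
theorem dirichlet_solution_operator_difference
    {H H1 G : Type*}
    [NormedAddCommGroup H] [InnerProductSpace ℂ H] [CompleteSpace H]
    [NormedAddCommGroup H1] [InnerProductSpace ℂ H1] [CompleteSpace H1]
    [NormedAddCommGroup G] [InnerProductSpace ℂ G] [CompleteSpace G]
    (J : H1 →L[ℂ] H) (hJinj : Function.Injective J) (hJdense : DenseRange J)
    (hform : H1 → H1 → ℂ)
    (hpol : ∀ u v : H1, (inner ℂ u v : ℂ) = (inner ℂ (J u) (J v) : ℂ) + hform u v)
    (Γ : H1 →L[ℂ] G)
    (hker : Dense (J '' ((LinearMap.ker (Γ : H1 →ₗ[ℂ] G) : Submodule ℂ H1) : Set H1)))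
    (hran : Dense ((LinearMap.range (Γ : H1 →ₗ[ℂ] G) : Submodule ℂ G) : Set G))
    (HD : H →ₗ.[ℂ] H)
    (hHDdom : ∀ u : HD.domain, ∃ u1 : H1, J u1 = (u : H) ∧ Γ u1 = 0 ∧
      ∀ f : H1, Γ f = 0 → hform f u1 = (inner ℂ (J f) (HD u) : ℂ))
    (hHDmax : ∀ (u1 : H1) (w : H), Γ u1 = 0 →
      (∀ f : H1, Γ f = 0 → hform f u1 = (inner ℂ (J f) w : ℂ)) →
      ∃ hu : J u1 ∈ HD.domain, HD ⟨J u1, hu⟩ = w)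
    (z w : ℂ) (Rz : H →L[ℂ] H) (hRz : ResolventAt HD z Rz)
    -- the Dirichlet solution operator at `z`
    (Sz : (LinearMap.range (Γ : H1 →ₗ[ℂ] G) : Submodule ℂ G) →ₗ[ℂ] H1)
    (hSz1 : ∀ (φ : (LinearMap.range (Γ : H1 →ₗ[ℂ] G) : Submodule ℂ G)) (f : H1), Γ f = 0 →
      hform f (Sz φ) = z * (inner ℂ (J f) (J (Sz φ)) : ℂ))
    (hSz2 : ∀ φ : (LinearMap.range (Γ : H1 →ₗ[ℂ] G) : Submodule ℂ G), Γ (Sz φ) = (φ : G))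
    -- the Dirichlet solution operator at `w`
    (Sw : (LinearMap.range (Γ : H1 →ₗ[ℂ] G) : Submodule ℂ G) →ₗ[ℂ] H1)
    (hSw1 : ∀ (φ : (LinearMap.range (Γ : H1 →ₗ[ℂ] G) : Submodule ℂ G)) (f : H1), Γ f = 0 →
      hform f (Sw φ) = w * (inner ℂ (J f) (J (Sw φ)) : ℂ))
    (hSw2 : ∀ φ : (LinearMap.range (Γ : H1 →ₗ[ℂ] G) : Submodule ℂ G), Γ (Sw φ) = (φ : G)) :
    ∀ φ : (LinearMap.range (Γ : H1 →ₗ[ℂ] G) : Submodule ℂ G), ∃ v : H1,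
      Γ v = 0 ∧ J v = (z - w) • Rz (J (Sw φ)) ∧ Sz φ = Sw φ + v :=
  dirichlet_solution_operator_difference_general J hJinj hform hpol Γ HD hHDdom hHDmax z w Rz hRz Sz
    hSz1 hSz2 Sw hSw1 hSw2
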